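/- For any positive even integer m and s ∈ [0, 1/2) with ms an integer, the central binomial coefficient satisfies C(m, m/2 + ms) = (√2 / √(π m (1 - 4s²))) · exp(-m T(1/2 + s, 1/2) + m log 2 + ω(s)), where |ω(s)| ≤ 3/(12m - 6ms) (i.e., ω(s) = a₁ - a₂(s) - a₃(s) with 1/(12m+1) ≤ a₁ ≤ 1/(12m), 1/(6m+12ms+1) ≤ a₂(s) ≤ 1/(6m+12ms), 1/(6m-12ms+1) ≤ a₃(s) ≤ 1/(6m-12ms)). -/

import Mathlib

set_option maxHeartbeats 1000000

open Real Filter Stirling Topology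

noncomputable def dSt (n : ℕ) : ℝ := Real.log (Nat.factorial n) - ((n : ℝ) + 1/2) * Real.log n + n

lemma dSt_eq (n : ℕ) (hn : 0 < n) :
    dSt n = Real.log (Stirling.stirlingSeq n) + (1/2) * Real.log 2 := by
  have hn' : (0:ℝ) < n := by exact_mod_cast hn
  rw [Stirling.log_stirlingSeq_formula, dSt, Real.log_mul (by norm_num) (by positivity),
    Real.log_div (by positivity) (Real.exp_ne_zero 1), Real.log_exp]
  ring

lemma dSt_tendsto : Tendsto (fun n => dSt (n + 1)) atTop
    (𝓝 (Real.log (Real.sqrt Real.pi) + (1/2) * Real.log 2)) := by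
  have h1 : Tendsto (fun n : ℕ => Stirling.stirlingSeq (n + 1)) atTop (𝓝 (Real.sqrt Real.pi)) :=
    Stirling.tendsto_stirlingSeq_sqrt_pi.comp (tendsto_add_atTop_nat 1)
  have h2 : Tendsto (fun n : ℕ => Real.log (Stirling.stirlingSeq (n + 1))) atTop
      (𝓝 (Real.log (Real.sqrt Real.pi))) :=
    ((Real.continuousAt_log (by positivity)).tendsto).comp h1
  have := h2.add_const ((1/2) * Real.log 2)
  refine this.congr fun n => ?_
  rw [dSt_eq _ n.succ_pos]

lemma pow_three_ge (k : ℕ) : (2 * (k:ℝ) + 3) ≤ 3 ^ (k + 1) := by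
  induction k with
  | zero => norm_num
  | succ j ih =>
    have : (3:ℝ) ^ (j + 1 + 1) = 3 * 3 ^ (j + 1) := by ring
    rw [this]
    push_cast
    nlinarith [pow_nonneg (by norm_num : (0:ℝ) ≤ 3) (j+1)]

lemma dSt_diff_hasSum (n : ℕ) :
    HasSum (fun k : ℕ => (1 : ℝ) / (2 * (↑k + 1) + 1) * ((1 / (2 * (↑n + 1) + 1)) ^ 2) ^ (k + 1))
      (dSt (n + 1) - dSt (n + 2)) := by
  have h := Stirling.log_stirlingSeq_diff_hasSum n
  have e : dSt (n + 1) - dSt (n + 2) =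
      Real.log (Stirling.stirlingSeq (n + 1)) - Real.log (Stirling.stirlingSeq (n + 2)) := by
    rw [dSt_eq _ n.succ_pos, dSt_eq _ (n + 1).succ_pos]; ring
  rw [e]
  convert h using 2 with k
  push_cast
  ring_nf

lemma dSt_diff_le (n : ℕ) :
    dSt (n + 1) - dSt (n + 2) ≤ 1 / (12 * ((n:ℝ) + 1)) - 1 / (12 * ((n:ℝ) + 2)) := by
  set N : ℝ := (n : ℝ) + 1 with hN
  have hN1 : (1:ℝ) ≤ N := by simp [hN]
  set t : ℝ := 1 / (2 * N + 1) with ht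
  have ht0 : 0 < t := by positivity
  have ht1 : t < 1 := by
    rw [ht, div_lt_one (by positivity)]; nlinarith
  have hr0 : (0:ℝ) ≤ t ^ 2 := by positivity
  have hr1 : t ^ 2 < 1 := by nlinarith
  have hg : HasSum (fun k : ℕ => (1/3 * t ^ 2) * (t ^ 2) ^ k)
      ((1/3 * t ^ 2) * (1 - t ^ 2)⁻¹) :=
    (hasSum_geometric_of_lt_one hr0 hr1).mul_left _
  have hle : dSt (n + 1) - dSt (n + 2) ≤ (1/3 * t ^ 2) * (1 - t ^ 2)⁻¹ := by
    refine hasSum_le (fun k => ?_) (dSt_diff_hasSum n) hg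
    have h2 : ((1 / (2 * (↑n + 1) + 1) : ℝ) ^ 2) ^ (k + 1) = t ^ 2 * (t ^ 2) ^ k := by
      rw [ht, hN]; ring
    rw [h2, ← mul_assoc]
    have h1 : (1:ℝ) / (2 * (↑k + 1) + 1) ≤ 1/3 := by
      rw [div_le_div_iff₀ (by positivity) (by norm_num)]
      push_cast; linarith [Nat.cast_nonneg (α := ℝ) k]
    have hstep : (1:ℝ) / (2 * (↑k + 1) + 1) * t ^ 2 ≤ 1/3 * t ^ 2 :=
      mul_le_mul_of_nonneg_right h1 (sq_nonneg t)
    exact mul_le_mul_of_nonneg_right hstep (pow_nonneg (sq_nonneg t) k)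
  refine hle.trans (le_of_eq ?_)
  have h2N : (2 * N + 1) ≠ 0 := by positivity
  rw [ht, show 1 - ((1:ℝ) / (2 * N + 1)) ^ 2 = (4 * N * (N + 1)) / ((2 * N + 1) ^ 2) by
    field_simp; ring,
    show ((n:ℝ) + 2) = N + 1 by rw [hN]; ring]
  have hNne : N ≠ 0 := by positivity
  have hN1ne : N + 1 ≠ 0 := by positivity
  field_simp
  ring

lemma le_dSt_diff (n : ℕ) :
    1 / (12 * ((n:ℝ) + 1) + 1) - 1 / (12 * ((n:ℝ) + 2) + 1) ≤ dSt (n + 1) - dSt (n + 2) := by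
  set N : ℝ := (n : ℝ) + 1 with hN
  have hN1 : (1:ℝ) ≤ N := by simp [hN]
  set t : ℝ := 1 / (2 * N + 1) with ht
  have ht0 : 0 < t := by positivity
  have ht1 : t < 1 := by rw [ht, div_lt_one (by positivity)]; nlinarith
  have hr0 : (0:ℝ) ≤ t ^ 2 / 3 := by positivity
  have hr1 : t ^ 2 / 3 < 1 := by nlinarith
  have hg : HasSum (fun k : ℕ => (t ^ 2 / 3) * (t ^ 2 / 3) ^ k)
      ((t ^ 2 / 3) * (1 - t ^ 2 / 3)⁻¹) :=
    (hasSum_geometric_of_lt_one hr0 hr1).mul_left _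
  have hle : (t ^ 2 / 3) * (1 - t ^ 2 / 3)⁻¹ ≤ dSt (n + 1) - dSt (n + 2) := by
    refine hasSum_le (fun k => ?_) hg (dSt_diff_hasSum n)
    have h2 : ((1 / (2 * (↑n + 1) + 1) : ℝ) ^ 2) ^ (k + 1) = (t ^ 2) ^ (k + 1) := by
      rw [ht, hN]
    rw [h2, one_div, inv_mul_eq_div]
    have e1 : (t ^ 2 / 3) * (t ^ 2 / 3) ^ k = (t ^ 2) ^ (k + 1) / 3 ^ (k + 1) := by
      exact (pow_succ' _ _).symm.trans (div_pow _ _ _)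
    rw [e1]
    have h3 : (2 * ((k:ℝ) + 1) + 1) ≤ 3 ^ (k + 1) := by
      have := pow_three_ge k; push_cast at this ⊢; linarith
    gcongr
  refine le_trans ?_ hle
  have hval : (t ^ 2 / 3) * (1 - t ^ 2 / 3)⁻¹ = 1 / (12 * N ^ 2 + 12 * N + 2) := by
    have h2N : (2 * N + 1) ≠ 0 := by positivity
    rw [ht, show 1 - ((1:ℝ) / (2 * N + 1)) ^ 2 / 3 = (12 * N ^ 2 + 12 * N + 2) / (3 * (2 * N + 1) ^ 2) by
      field_simp; ring]
    field_simp
  rw [hval, show 12 * ((n:ℝ) + 1) + 1 = 12 * N + 1 from by rw [hN],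
    show 12 * ((n:ℝ) + 2) + 1 = 12 * N + 13 from by rw [hN]; ring,
    div_sub_div _ _ (by positivity : (12*N+1) ≠ 0) (by positivity : (12*N+13) ≠ 0),
    div_le_div_iff₀ (by positivity) (by positivity)]
  nlinarith

lemma tends0 (c : ℝ) : Tendsto (fun j : ℕ => 1 / (12 * ((j:ℝ) + 1) + c)) atTop (𝓝 0) := by
  have h : Tendsto (fun j : ℕ => 12 * ((j:ℝ) + 1) + c) atTop atTop := by
    apply Filter.tendsto_atTop_add_const_right
    apply Filter.Tendsto.const_mul_atTop (by norm_num : (0:ℝ) < 12)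
    exact Filter.tendsto_atTop_add_const_right _ _ tendsto_natCast_atTop_atTop
  simpa [one_div, Function.comp_def] using tendsto_inv_atTop_zero.comp h

lemma dSt_bounds (n : ℕ) (hn : 0 < n) :
    Real.log (Real.sqrt Real.pi) + (1/2) * Real.log 2 + 1 / (12 * (n:ℝ) + 1) ≤ dSt n ∧
    dSt n ≤ Real.log (Real.sqrt Real.pi) + (1/2) * Real.log 2 + 1 / (12 * (n:ℝ)) := by
  set L : ℝ := Real.log (Real.sqrt Real.pi) + (1/2) * Real.log 2 with hL
  obtain ⟨j, rfl⟩ : ∃ j, n = j + 1 := ⟨n - 1, (Nat.succ_pred_eq_of_pos hn).symm⟩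
  constructor
  · set v : ℕ → ℝ := fun j => dSt (j + 1) - 1 / (12 * ((j:ℝ) + 1) + 1) with hv
    have hanti : Antitone v := by
      apply antitone_nat_of_succ_le
      intro i
      have := le_dSt_diff i
      simp only [hv]
      push_cast
      ring_nf
      ring_nf at this
      linarith
    have htd : Tendsto v atTop (𝓝 L) := by
      have h := dSt_tendsto.sub (tends0 1)
      rw [sub_zero] at h
      exact h
    have := hanti.le_of_tendsto htd j
    simp only [hv] at this
    push_cast
    linarith
  · set u : ℕ → ℝ := fun j => dSt (j + 1) - 1 / (12 * ((j:ℝ) + 1)) with hu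
    have hmono : Monotone u := by
      apply monotone_nat_of_le_succ
      intro i
      have := dSt_diff_le i
      simp only [hu]
      push_cast
      ring_nf
      ring_nf at this
      linarith
    have htd : Tendsto u atTop (𝓝 L) := by
      have h0 : Tendsto (fun j : ℕ => 1 / (12 * ((j:ℝ) + 1))) atTop (𝓝 0) := by
        have := tends0 0
        simp only [add_zero] at this
        exact this
      have h := dSt_tendsto.sub h0
      rw [sub_zero] at h
      exact h
    have := hmono.ge_of_tendsto htd j
    simp only [hu] at this
    push_cast
    linarith

lemma fact_exp (n : ℕ) : (Nat.factorial n : ℝ) = Real.exp (dSt n + ((n:ℝ) + 1/2) * Real.log n - n) := by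
  have h : dSt n + ((n:ℝ) + 1/2) * Real.log n - n = Real.log (Nat.factorial n) := by
    rw [dSt]; ring
  rw [h, Real.exp_log (by exact_mod_cast n.factorial_pos)]

lemma exponent_id (m p q A B C : ℝ) (hm : 0 < m) (hp : 0 < p) (hq : 0 < q)
    (hpq : p + q = m) :
    (A + (m + 1/2) * Real.log m - m) -
      ((B + (p + 1/2) * Real.log p - p) + (C + (q + 1/2) * Real.log q - q)) =
    Real.log (Real.sqrt 2 / Real.sqrt (4 * Real.pi * p * q / m)) +
      (-m * ((p / m) * Real.log (2 * p / m) + (q / m) * Real.log (2 * q / m)) +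
        m * Real.log 2 +
        ((A - (Real.log (Real.sqrt Real.pi) + (1/2) * Real.log 2)) -
         (B - (Real.log (Real.sqrt Real.pi) + (1/2) * Real.log 2)) -
         (C - (Real.log (Real.sqrt Real.pi) + (1/2) * Real.log 2)))) := by
  have hpi : (0:ℝ) < Real.pi := Real.pi_pos
  have h1 : Real.log (Real.sqrt 2 / Real.sqrt (4 * Real.pi * p * q / m)) =
      (1/2) * Real.log 2 - (1/2) * (2 * Real.log 2 + Real.log Real.pi + Real.log p +
        Real.log q - Real.log m) := by
    rw [Real.log_div (by positivity) (by positivity), Real.log_sqrt (by norm_num),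
      Real.log_sqrt (by positivity), Real.log_div (by positivity) (by positivity),
      Real.log_mul (by positivity) (by positivity), Real.log_mul (by positivity) (by positivity),
      Real.log_mul (by norm_num) (by positivity),
      show (4:ℝ) = 2^2 by norm_num, Real.log_pow]
    push_cast; ring
  have h2 : Real.log (2 * p / m) = Real.log 2 + Real.log p - Real.log m := by
    rw [Real.log_div (by positivity) (by positivity), Real.log_mul (by norm_num) (by positivity)]
  have h3 : Real.log (2 * q / m) = Real.log 2 + Real.log q - Real.log m := by
    rw [Real.log_div (by positivity) (by positivity), Real.log_mul (by norm_num) (by positivity)]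
  have h4 : Real.log (Real.sqrt Real.pi) = (1/2) * Real.log Real.pi := by
    rw [Real.log_sqrt (by positivity)]; ring
  rw [h1, h2, h3, h4]
  have hmne : m ≠ 0 := ne_of_gt hm
  field_simp
  linear_combination (2 - 2*Real.log m + 2*Real.log 2) * hpq

/-- Stirling identity for the binomial coefficient C(m, m/2 + ms)
with explicit error term ω(s) = a₁ - a₂(s) - a₃(s). -/
theorem binomial_coeff_stirling (m k : ℕ) (s : ℝ) (hm : 0 < m) (hme : Even m)
    (hs0 : 0 ≤ s) (hs : s < 1 / 2) (hks : (k : ℝ) = m * s) :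
    ∃ a₁ a₂ a₃ : ℝ,
      1 / (12 * (m : ℝ) + 1) ≤ a₁ ∧ a₁ ≤ 1 / (12 * (m : ℝ)) ∧
      1 / (6 * (m : ℝ) + 12 * m * s + 1) ≤ a₂ ∧ a₂ ≤ 1 / (6 * (m : ℝ) + 12 * m * s) ∧
      1 / (6 * (m : ℝ) - 12 * m * s + 1) ≤ a₃ ∧ a₃ ≤ 1 / (6 * (m : ℝ) - 12 * m * s) ∧
      (m.choose (m / 2 + k) : ℝ) =
        Real.sqrt 2 / Real.sqrt (Real.pi * m * (1 - 4 * s ^ 2)) *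
          Real.exp (-(m : ℝ) *
              ((1 / 2 + s) * Real.log ((1 / 2 + s) / (1 / 2)) +
                (1 / 2 - s) * Real.log ((1 / 2 - s) / (1 / 2))) +
            m * Real.log 2 + (a₁ - a₂ - a₃)) := by
  have hm0 : (0:ℝ) < m := by exact_mod_cast hm
  obtain ⟨M, hM2⟩ := hme
  have hMdiv : m / 2 = M := by omega
  have hMr : (M:ℝ) = (m:ℝ) / 2 := by
    have : (m:ℝ) = M + M := by exact_mod_cast hM2
    linarith
  have hkM : k < M := by
    have h1 : (k:ℝ) < (M:ℝ) := by rw [hks, hMr]; nlinarith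
    exact_mod_cast h1
  set n₂ := M + k with hn₂
  set n₃ := M - k with hn₃
  have hn₃r : (n₃:ℝ) = (M:ℝ) - k := by
    rw [hn₃]; push_cast [Nat.cast_sub hkM.le]; ring
  have hp : (n₂:ℝ) = (m:ℝ)/2 + m * s := by rw [hn₂]; push_cast; rw [hMr, hks]
  have hq : (n₃:ℝ) = (m:ℝ)/2 - m * s := by rw [hn₃r, hMr, hks]
  have hp0 : (0:ℝ) < n₂ := by rw [hp]; nlinarith
  have hq0 : (0:ℝ) < n₃ := by rw [hq]; nlinarith
  have hn₂pos : 0 < n₂ := by exact_mod_cast hp0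
  have hn₃pos : 0 < n₃ := by exact_mod_cast hq0
  have hpq : (n₂:ℝ) + n₃ = m := by rw [hp, hq]; ring
  set L : ℝ := Real.log (Real.sqrt Real.pi) + (1/2) * Real.log 2 with hL
  obtain ⟨hb1l, hb1u⟩ := dSt_bounds m hm
  obtain ⟨hb2l, hb2u⟩ := dSt_bounds n₂ hn₂pos
  obtain ⟨hb3l, hb3u⟩ := dSt_bounds n₃ hn₃pos
  have e2 : 12 * (n₂:ℝ) = 6 * m + 12 * m * s := by rw [hp]; ring
  have e3 : 12 * (n₃:ℝ) = 6 * m - 12 * m * s := by rw [hq]; ring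
  refine ⟨dSt m - L, dSt n₂ - L, dSt n₃ - L,
    by linarith, by linarith,
    by rw [show 6 * (m:ℝ) + 12 * m * s + 1 = 12 * (n₂:ℝ) + 1 by rw [e2]]; linarith,
    by rw [show 6 * (m:ℝ) + 12 * m * s = 12 * (n₂:ℝ) by rw [e2]]; linarith,
    by rw [show 6 * (m:ℝ) - 12 * m * s + 1 = 12 * (n₃:ℝ) + 1 by rw [e3]]; linarith,
    by rw [show 6 * (m:ℝ) - 12 * m * s = 12 * (n₃:ℝ) by rw [e3]]; linarith, ?_⟩
  -- main identity
  rw [hMdiv]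
  have hsub : m - n₂ = n₃ := by omega
  have hle2 : n₂ ≤ m := by omega
  have hchoose : (m.choose n₂ : ℝ) =
      (Nat.factorial m : ℝ) / ((Nat.factorial n₂ : ℝ) * (Nat.factorial n₃ : ℝ)) := by
    rw [Nat.cast_choose ℝ hle2, hsub]
  rw [hchoose, fact_exp m, fact_exp n₂, fact_exp n₃, ← Real.exp_add, ← Real.exp_sub]
  have hX : Real.pi * m * (1 - 4 * s ^ 2) = 4 * Real.pi * n₂ * n₃ / m := by
    rw [hp, hq]; field_simp; ring
  have hXpos : (0:ℝ) < 4 * Real.pi * n₂ * n₃ / m := by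
    have := Real.pi_pos; positivity
  have hpre : (0:ℝ) < Real.sqrt 2 / Real.sqrt (4 * Real.pi * n₂ * n₃ / m) := by
    have h2 : (0:ℝ) < Real.sqrt 2 := Real.sqrt_pos.mpr (by norm_num)
    have h3 : (0:ℝ) < Real.sqrt (4 * Real.pi * n₂ * n₃ / m) := Real.sqrt_pos.mpr hXpos
    positivity
  rw [hX, show Real.sqrt 2 / Real.sqrt (4 * Real.pi * ↑n₂ * ↑n₃ / ↑m) =
      Real.exp (Real.log (Real.sqrt 2 / Real.sqrt (4 * Real.pi * ↑n₂ * ↑n₃ / ↑m))) from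
      (Real.exp_log hpre).symm, ← Real.exp_add, Real.exp_eq_exp]
  have hhalf1 : (1/2 + s) = (n₂:ℝ) / m := by rw [hp]; field_simp
  have hhalf2 : (1/2 - s) = (n₃:ℝ) / m := by rw [hq]; field_simp
  have hdiv1 : ((1/2 + s) / (1/2) : ℝ) = 2 * n₂ / m := by rw [hhalf1]; ring
  have hdiv2 : ((1/2 - s) / (1/2) : ℝ) = 2 * n₃ / m := by rw [hhalf2]; ring
  rw [hdiv1, hdiv2, hhalf1, hhalf2]
  exact exponent_id (m:ℝ) n₂ n₃ (dSt m) (dSt n₂) (dSt n₃) hm0 hp0 hq0 hpq
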